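/- Let Σ and Γ be finite alphabets and let π : Σ → Γ be a surjective mapping, extended letterwise (entrywise) to arrays and to array languages. Then for every z ∈ {h, p, r, c, rc} and every array pattern α, π(L_{Σ,z}(α)) = L_{Γ,z}(α). Consequently, each of the classes 𝓛_z is closed under projections. -/

import Mathlib

/-- A nonempty rectangular two-dimensional word (array) over `σ`. -/
structure Arr (σ : Type) : Type where
  rows : ℕ
  cols : ℕ
  rows_pos : 0 < rows
  cols_pos : 0 < cols
  entry : Fin rows → Fin cols → σ

namespace Arr

variable {σ γ : Type}

/-- Column concatenation: place `V` to the right of `U`; `none` if heights differ. -/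
def colCat (U V : Arr σ) : Option (Arr σ) :=
  if h : U.rows = V.rows then
    some { rows := U.rows
           cols := U.cols + V.cols
           rows_pos := U.rows_pos
           cols_pos := by have := U.cols_pos; omega
           entry := fun i j =>
             if hj : (j : ℕ) < U.cols then U.entry i ⟨j, hj⟩
             else V.entry (Fin.cast h i) ⟨(j : ℕ) - U.cols, by have := j.isLt; omega⟩ }
  else none

/-- Row concatenation: place `V` below `U`; `none` if widths differ. -/
def rowCat (U V : Arr σ) : Option (Arr σ) :=
  if h : U.cols = V.cols then
    some { rows := U.rows + V.rows
           cols := U.cols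
           rows_pos := by have := U.rows_pos; omega
           cols_pos := U.cols_pos
           entry := fun i j =>
             if hi : (i : ℕ) < U.rows then U.entry ⟨i, hi⟩ j
             else V.entry ⟨(i : ℕ) - U.rows, by have := i.isLt; omega⟩ (Fin.cast h j) }
  else none

/-- A two-dimensional morphism: compatible with both concatenations,
with "both sides undefined" counting as equal. -/
def IsMorphism (h : Arr σ → Arr γ) : Prop :=
  (∀ V W : Arr σ, Option.map h (colCat V W) = colCat (h V) (h W)) ∧
  (∀ V W : Arr σ, Option.map h (rowCat V W) = rowCat (h V) (h W))

/-- Concatenate a nonempty list of (possibly undefined) arrays with the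
given partial concatenation operation; `none` on the empty list. -/
def catListO (op : Arr σ → Arr σ → Option (Arr σ)) : List (Option (Arr σ)) → Option (Arr σ)
  | [] => none
  | [a] => a
  | a :: b :: rest => a.bind fun x => (catListO op (b :: rest)).bind fun y => op x y

/-- `g_{⦶,⊖}`: substitute and assemble, first column-concatenating each row,
then row-concatenating the rows. -/
def subCR {X : Type} (g : X → Arr σ) (α : Arr X) : Option (Arr σ) :=
  catListO rowCat (List.ofFn fun i : Fin α.rows =>
    catListO colCat (List.ofFn fun j : Fin α.cols => some (g (α.entry i j))))

/-- `g_{⊖,⦶}`: substitute and assemble, first row-concatenating each column,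
then column-concatenating the columns. -/
def subRC {X : Type} (g : X → Arr σ) (α : Arr X) : Option (Arr σ) :=
  catListO colCat (List.ofFn fun j : Fin α.cols =>
    catListO rowCat (List.ofFn fun i : Fin α.rows => some (g (α.entry i j))))

/-- A substitution is uniform if all images have the same dimensions. -/
def Uniform {X : Type} (g : X → Arr σ) : Prop :=
  ∃ m n : ℕ, ∀ x : X, (g x).rows = m ∧ (g x).cols = n

end Arr

open Arr

/-- The five modes of array pattern languages. -/
inductive Mode | h | p | r | c | rc
deriving DecidableEq

/-- The array pattern language of an array pattern (an array over the
variables `ℕ`) in each mode. -/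
def langOf (σ : Type) : Mode → Arr ℕ → Set (Arr σ)
  | Mode.h, α => {W | ∃ g : Arr ℕ → Arr σ, IsMorphism g ∧ g α = W}
  | Mode.p, α => {W | ∃ s : ℕ → Arr σ, subCR s α = some W ∧ subRC s α = some W}
  | Mode.r, α => {W | ∃ s : ℕ → Arr σ, subCR s α = some W}
  | Mode.c, α => {W | ∃ s : ℕ → Arr σ, subRC s α = some W}
  | Mode.rc, α =>
      {W | ∃ s : ℕ → Arr σ, subCR s α = some W} ∪ {W | ∃ s : ℕ → Arr σ, subRC s α = some W}

/-- The entrywise extension of a letter-to-letter map to arrays. -/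
def mapArr {σ Γ : Type} (π : σ → Γ) (W : Arr σ) : Arr Γ :=
  ⟨W.rows, W.cols, W.rows_pos, W.cols_pos, fun i j => π (W.entry i j)⟩


/-! Projections commute with both concatenations, hence with every way of assembling images of a
pattern; so `π` maps each language of `α` over `σ` into the corresponding language over `Γ`. A right
inverse `r` of `π` gives the converse: an image `W` over `Γ` is the `π`-image of the array `r(W)`,
which lies in the language over `σ` by the same argument applied to `r`. -/

namespace Arr

variable {σ γ δ : Type}

theorem colCat_mapArr (f : σ → γ) (U V : Arr σ) :
    colCat (mapArr f U) (mapArr f V) = (colCat U V).map (mapArr f) := by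
  unfold colCat mapArr
  split_ifs with h
  · simp only [Option.map_some, Option.some.injEq, Arr.mk.injEq, heq_eq_eq, true_and]
    funext i j
    rw [apply_dite f]
  · rfl

theorem rowCat_mapArr (f : σ → γ) (U V : Arr σ) :
    rowCat (mapArr f U) (mapArr f V) = (rowCat U V).map (mapArr f) := by
  unfold rowCat mapArr
  split_ifs with h
  · simp only [Option.map_some, Option.some.injEq, Arr.mk.injEq, heq_eq_eq, true_and]
    funext i j
    rw [apply_dite f]
  · rfl

theorem mapArr_mapArr (f : γ → δ) (g : σ → γ) (W : Arr σ) :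
    mapArr f (mapArr g W) = mapArr (f ∘ g) W := rfl

theorem mapArr_id (W : Arr σ) : mapArr id W = W := rfl

theorem _root_.Function.RightInverse.mapArr {f : σ → γ} {r : γ → σ}
    (h : Function.RightInverse r f) : Function.RightInverse (mapArr r) (mapArr f) := fun W => by
  rw [mapArr_mapArr, h.comp_eq_id, mapArr_id]

theorem isMorphism_mapArr (f : σ → γ) : IsMorphism (mapArr f) :=
  ⟨fun U V => (colCat_mapArr f U V).symm, fun U V => (rowCat_mapArr f U V).symm⟩

theorem IsMorphism.comp {g : Arr γ → Arr δ} {f : Arr σ → Arr γ} (hg : IsMorphism g)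
    (hf : IsMorphism f) : IsMorphism (g ∘ f) :=
  ⟨fun U V => by rw [← Option.map_map, hf.1, hg.1]; rfl,
    fun U V => by rw [← Option.map_map, hf.2, hg.2]; rfl⟩

theorem catListO_map {opσ : Arr σ → Arr σ → Option (Arr σ)}
    {opγ : Arr γ → Arr γ → Option (Arr γ)} (g : Arr σ → Arr γ)
    (hop : ∀ U V, opγ (g U) (g V) = (opσ U V).map g) :
    ∀ l : List (Option (Arr σ)), catListO opγ (l.map (Option.map g)) = (catListO opσ l).map g
  | [] => rfl
  | [_] => rfl
  | a :: b :: rest => by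
    have ih := catListO_map g hop (b :: rest)
    simp only [List.map_cons] at ih ⊢
    simp only [catListO, ih]
    cases a <;> cases catListO opσ (b :: rest) <;> simp [hop]

theorem subCR_mapArr {X : Type} (f : σ → γ) (s : X → Arr σ) (α : Arr X) :
    subCR (mapArr f ∘ s) α = (subCR s α).map (mapArr f) := by
  simp only [subCR, ← catListO_map _ (rowCat_mapArr f), ← catListO_map _ (colCat_mapArr f),
    List.map_ofFn, Function.comp_def, Option.map_some]

theorem subRC_mapArr {X : Type} (f : σ → γ) (s : X → Arr σ) (α : Arr X) :
    subRC (mapArr f ∘ s) α = (subRC s α).map (mapArr f) := by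
  simp only [subRC, ← catListO_map _ (rowCat_mapArr f), ← catListO_map _ (colCat_mapArr f),
    List.map_ofFn, Function.comp_def, Option.map_some]

end Arr

theorem mapArr_mem_langOf {σ γ : Type} (f : σ → γ) {z : Mode} {α : Arr ℕ} {W : Arr σ}
    (hW : W ∈ langOf σ z α) : mapArr f W ∈ langOf γ z α := by
  have cr : ∀ {s}, subCR s α = some W → subCR (mapArr f ∘ s) α = some (mapArr f W) :=
    fun hs => by rw [subCR_mapArr, hs, Option.map_some]
  have rc : ∀ {s}, subRC s α = some W → subRC (mapArr f ∘ s) α = some (mapArr f W) :=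
    fun hs => by rw [subRC_mapArr, hs, Option.map_some]
  cases z with
  | h => obtain ⟨g, hg, rfl⟩ := hW; exact ⟨mapArr f ∘ g, (isMorphism_mapArr f).comp hg, rfl⟩
  | p => obtain ⟨s, hcr, hrc⟩ := hW; exact ⟨_, cr hcr, rc hrc⟩
  | r => obtain ⟨s, hs⟩ := hW; exact ⟨_, cr hs⟩
  | c => obtain ⟨s, hs⟩ := hW; exact ⟨_, rc hs⟩
  | rc => exact hW.imp (fun ⟨_, hs⟩ => ⟨_, cr hs⟩) (fun ⟨_, hs⟩ => ⟨_, rc hs⟩)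

theorem image_mapArr_langOf {σ γ : Type} {π : σ → γ} (hπ : Function.Surjective π) (z : Mode)
    (α : Arr ℕ) : mapArr π '' langOf σ z α = langOf γ z α := by
  obtain ⟨r, hr⟩ := hπ.hasRightInverse
  refine (Set.image_subset_iff.2 fun W hW => mapArr_mem_langOf π hW).antisymm fun W hW => ?_
  exact ⟨mapArr r W, mapArr_mem_langOf r hW, hr.mapArr W⟩

theorem stmt10_general {σ Γ : Type} (π : σ → Γ)
    (hπ : Function.Surjective π) (z : Mode) :
    (∀ α : Arr ℕ, mapArr π '' langOf σ z α = langOf Γ z α) ∧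
    (∀ L ∈ {L | ∃ α : Arr ℕ, L = langOf σ z α},
      mapArr π '' L ∈ {L | ∃ α : Arr ℕ, L = langOf Γ z α}) :=
  ⟨image_mapArr_langOf hπ z, fun _ ⟨α, hL⟩ => ⟨α, hL ▸ image_mapArr_langOf hπ z α⟩⟩

/-- for a projection (surjective letter-to-letter map)
`π : Σ → Γ`, every mode `z` and every array pattern `α`,
`π(L_{Σ,z}(α)) = L_{Γ,z}(α)`; consequently each class is closed under
projections. -/
theorem stmt10 {σ Γ : Type} [Fintype σ] [Fintype Γ] (π : σ → Γ)
    (hπ : Function.Surjective π) (z : Mode) :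
    (∀ α : Arr ℕ, mapArr π '' langOf σ z α = langOf Γ z α) ∧
    (∀ L ∈ {L | ∃ α : Arr ℕ, L = langOf σ z α},
      mapArr π '' L ∈ {L | ∃ α : Arr ℕ, L = langOf Γ z α}) :=
  stmt10_general π hπ z
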